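/- arXiv:1810.02396 — 3 statements merged into one kernel-verified Lean document; each statement's English description precedes it below -/
import Mathlib

section
/- For q = 2 and n ≥ 1, any inner product encoding of the equality predicate EQ_n on [n] modulo 2 has length at least n − 1. -/
/-!
Writing the encodings as the rows of `A : 𝔽₂^{n×ℓ}` and `B : 𝔽₂^{n×ℓ}`, correctness says that
`A Bᵀ` is the matrix of `EQ_n` mod 2 with `0` meaning "equal", i.e. `J - I` with `J` the all-ones
matrix. Since `I = J - (J - I)` and `rank J ≤ 1`, subadditivity of rank gives
`n ≤ rank (J - I) + 1 ≤ ℓ + 1`.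
-/

namespace Matrix

variable {m n K : Type*}

theorem rank_add_le [Fintype n] [Field K] (A B : Matrix m n K) :
    (A + B).rank ≤ A.rank + B.rank := by
  rw [rank, rank, rank, mulVecLin_add]
  exact (Submodule.finrank_mono (LinearMap.range_add_le _ _)).trans
    (Submodule.finrank_add_le_finrank_add_finrank _ _)

theorem card_le_rank_sub_one_add_rank [Fintype n] [DecidableEq n] [Field K] (A : Matrix n n K) :
    Fintype.card n ≤ (A - 1).rank + A.rank := by
  have hone : A + (A - 1) * -1 = 1 := by rw [mul_neg_one, ← sub_eq_add_neg, sub_sub_cancel]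
  calc Fintype.card n = (A + (A - 1) * -1).rank := by rw [hone, rank_one]
    _ ≤ A.rank + (A - 1).rank := (rank_add_le _ _).trans (by gcongr; exact rank_mul_le_left _ _)
    _ = (A - 1).rank + A.rank := add_comm _ _

theorem rank_allOnes_le_one [Fintype n] [CommSemiring K] [StrongRankCondition K] :
    (of fun (_ : m) (_ : n) => (1 : K)).rank ≤ 1 := by
  simpa [vecMulVec] using rank_vecMulVec_le (fun _ : m => (1 : K)) (fun _ : n => (1 : K))

theorem eq_allOnes_sub_one_of_eq_zero_iff [DecidableEq n] {M : Matrix n n (ZMod 2)}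
    (hM : ∀ x y, M x y = 0 ↔ x = y) : M = of (fun _ _ => 1) - 1 := by
  ext x y
  by_cases hxy : x = y
  · simp [hxy, (hM y y).2 rfl]
  · have h2 : ∀ a : ZMod 2, a ≠ 0 → a = 1 := by decide
    simpa [hxy] using h2 _ (mt (hM x y).1 hxy)

end Matrix

open Matrix

theorem stmt_3_general {n ℓ : ℕ}
    (vx vy : Fin n → Fin ℓ → ZMod 2)
    (hcorrect : ∀ x y : Fin n, ((∑ i, vx x i * vy y i) = 0 ↔ x = y)) :
    n - 1 ≤ ℓ := by
  set M : Matrix (Fin n) (Fin n) (ZMod 2) := of vx * (of vy)ᵀ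
  have hM : M = of (fun _ _ => 1) - 1 := eq_allOnes_sub_one_of_eq_zero_iff hcorrect
  have hMrank : M.rank ≤ ℓ := (rank_mul_le_left _ _).trans (rank_le_width _)
  have hcard := card_le_rank_sub_one_add_rank (of fun (_ _ : Fin n) => (1 : ZMod 2))
  have hJrank := rank_allOnes_le_one (m := Fin n) (n := Fin n) (K := ZMod 2)
  rw [Fintype.card_fin, ← hM] at hcard
  omega

/-- Any inner product encoding of the equality predicate on `[n]` modulo 2
has length at least `n - 1`. -/
theorem stmt_3 {n ℓ : ℕ} (hn : 1 ≤ n)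
    (vx vy : Fin n → Fin ℓ → ZMod 2)
    (hcorrect : ∀ x y : Fin n, ((∑ i, vx x i * vy y i) = 0 ↔ x = y)) :
    n - 1 ≤ ℓ :=
  stmt_3_general vx vy hcorrect
end

section
/- If q is a product of k distinct primes, then any inner product encoding of the greater-than predicate GT_n on [n] modulo q has length at least n/k. -/
/-!
The matrix `M x y = ⟨vx x, vy y⟩` over `ZMod q` is upper triangular with diagonal entries
nonzero in `ZMod q`, so by the Chinese remainder theorem every index `x` has a prime `p i`
modulo which `M x x` is nonzero. Over the field `ZMod (p i)`, the principal submatrix on those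
indices is upper triangular with nonzero diagonal, hence invertible; as it factors through
`ZMod (p i) ^ ℓ`, there are at most `ℓ` such indices. Summing over the `k` primes gives
`n ≤ k * ℓ`.
-/

open Finset Matrix Function

theorem Matrix.card_le_card_of_isUpperTriangular_mul {K ι m : Type*} [Field K] [Fintype ι]
    [LinearOrder ι] [Fintype m] (A : Matrix ι m K) (B : Matrix m ι K)
    (htri : (A * B).IsUpperTriangular) (hdiag : ∀ i, (A * B) i i ≠ 0) :
    Fintype.card ι ≤ Fintype.card m := by
  classical
  have hunit : IsUnit (A * B) := by
    rw [isUnit_iff_isUnit_det, det_of_isUpperTriangular htri]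
    exact (prod_ne_zero_iff.2 fun i _ => hdiag i).isUnit
  calc Fintype.card ι = (A * B).rank := (rank_of_isUnit _ hunit).symm
    _ ≤ A.rank := rank_mul_le_left A B
    _ ≤ Fintype.card m := rank_le_card_width A

theorem card_filter_map_dotProduct_ne_zero_le {R K ι m : Type*} [CommRing R] [Field K]
    [DecidableEq K] [Fintype ι] [LinearOrder ι] [Fintype m] (f : R →+* K) (u w : ι → m → R)
    (htri : ∀ x y, y < x → u x ⬝ᵥ w y = 0) :
    #{x | f (u x ⬝ᵥ w x) ≠ 0} ≤ Fintype.card m := by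
  set S : Finset ι := {x | f (u x ⬝ᵥ w x) ≠ 0}
  let A : Matrix S m K := fun x j => f (u x j)
  let B : Matrix m S K := fun j y => f (w y j)
  have hAB : ∀ x y, (A * B) x y = f (u x ⬝ᵥ w y) := fun x y =>
    (f.map_dotProduct _ _).symm
  rw [← Fintype.card_coe]
  refine card_le_card_of_isUpperTriangular_mul A B (fun x y hxy => ?_) fun x => ?_
  · rw [hAB, htri x y hxy, map_zero]
  · rw [hAB]
    exact (mem_filter.1 x.2).2

theorem ZMod.exists_castHom_ne_zero {ι : Type*} [Fintype ι] {a : ι → ℕ}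
    (hcop : Pairwise (Nat.Coprime on a)) {b : ZMod (∏ i, a i)} (hb : b ≠ 0) :
    ∃ i, castHom (dvd_prod_of_mem a (mem_univ i)) (ZMod (a i)) b ≠ 0 := by
  by_contra! h
  exact hb <| (prodEquivPi a hcop).injective <| funext fun i => by simp [h i]

/-- If `q` is a product of `k` distinct primes, any inner product encoding of the
greater-than predicate on `[n]` modulo `q` has length at least `n / k`. -/
theorem stmt_7 {n k ℓ : ℕ} (p : Fin k → ℕ) (hp : ∀ i, (p i).Prime)
    (hinj : Function.Injective p) (q : ℕ) (hq : q = ∏ i, p i)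
    (vx vy : Fin n → Fin ℓ → ZMod q)
    (hcorrect : ∀ x y : Fin n, ((∑ i, vx x i * vy y i) = 0 ↔ y < x)) :
    n ≤ k * ℓ := by
  subst hq
  have hcop : Pairwise (Nat.Coprime on p) := fun i j hij =>
    (Nat.coprime_primes (hp i) (hp j)).2 (hinj.ne hij)
  let reduce (i : Fin k) := ZMod.castHom (dvd_prod_of_mem p (mem_univ i)) (ZMod (p i))
  let S (i : Fin k) : Finset (Fin n) := {x | reduce i (vx x ⬝ᵥ vy x) ≠ 0}
  have hcover (x : Fin n) : x ∈ univ.biUnion S := by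
    obtain ⟨i, hi⟩ := ZMod.exists_castHom_ne_zero hcop fun h => lt_irrefl x ((hcorrect x x).1 h)
    exact mem_biUnion.2 ⟨i, mem_univ i, mem_filter.2 ⟨mem_univ x, hi⟩⟩
  have hS (i : Fin k) : #(S i) ≤ ℓ := by
    have := Fact.mk (hp i)
    simpa using card_filter_map_dotProduct_ne_zero_le (reduce i) vx vy
      fun x y h => (hcorrect x y).2 h
  calc n = #(univ : Finset (Fin n)) := (card_fin n).symm
    _ ≤ #(univ.biUnion S) := card_le_card fun x _ => hcover x
    _ ≤ ∑ i, #(S i) := card_biUnion_le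
    _ ≤ ∑ _i : Fin k, ℓ := sum_le_sum fun i _ => hS i
    _ = k * ℓ := by simp
end

section
/- If q is a product of k distinct primes, then any inner product encoding of the inequality predicate NEQ_n on [n] modulo q has length at least n/k. (Any matrix representing NEQ_n is diagonal with nonzero diagonal entries modulo q; by pigeonhole, some prime factor p of q sees at least n/k nonzero diagonal entries, giving Z_p-rank at least n/k.) -/
/-!
An encoding of length `ℓ` writes the representing matrix as a product `A * B` of an `n × ℓ` and
an `ℓ × n` matrix, and that product is diagonal with nonzero entries. Since `q` is squarefree,
reduction modulo its prime factors `p₁, …, p_k` is injective on `ℤ/q` (Chinese remainder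
theorem), so each diagonal entry survives modulo some `pᵢ`. By pigeonhole some `pᵢ` keeps at
least `n / k` of them; on those indices the product is, over the field `ℤ/pᵢ`, a nonsingular
diagonal matrix whose rank is bounded by the inner dimension `ℓ`.
-/

namespace Matrix

theorem card_le_card_of_mul_eq_diagonal {K ι m : Type*} [Field K] [Fintype ι] [Fintype m]
    [DecidableEq ι] {A : Matrix ι m K} {B : Matrix m ι K} {d : ι → K} (hd : ∀ i, d i ≠ 0)
    (h : A * B = diagonal d) : Fintype.card ι ≤ Fintype.card m := by
  classical
  calc Fintype.card ι = Fintype.card {i // d i ≠ 0} :=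
        (Fintype.card_congr (Equiv.subtypeUnivEquiv hd)).symm
    _ = (diagonal d).rank := (rank_diagonal d).symm
    _ ≤ A.rank := h ▸ rank_mul_le_left A B
    _ ≤ Fintype.card m := rank_le_card_width A

theorem card_le_mul_card_of_mul_eq_diagonal {R ι m κ : Type*} {K : κ → Type*} [CommRing R]
    [∀ i, Field (K i)] [Fintype ι] [Fintype m] [Fintype κ] [DecidableEq ι]
    (φ : R →+* ∀ i, K i) (hφ : Function.Injective φ) {A : Matrix ι m R} {B : Matrix m ι R}
    {d : ι → R} (hd : ∀ x, d x ≠ 0) (h : A * B = diagonal d) :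
    Fintype.card ι ≤ Fintype.card κ * Fintype.card m := by
  classical
  have h_survives : ∀ x, ∃ i, φ (d x) i ≠ 0 := by
    intro x
    by_contra! hx
    exact hd x (hφ (by ext i; simp [hx]))
  choose f hf using h_survives
  have h_fiber : ∀ i, Fintype.card {x // f x = i} ≤ Fintype.card m := by
    intro i
    let φᵢ := (Pi.evalRingHom K i).comp φ
    refine card_le_card_of_mul_eq_diagonal (A := (A.submatrix Subtype.val id).map φᵢ)
      (B := (B.submatrix id Subtype.val).map φᵢ) (d := fun x => φᵢ (d x))
      (fun ⟨x, hx⟩ => by subst hx; exact hf x) ?_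
    rw [← Matrix.map_mul, ← submatrix_mul _ _ _ id _ Function.bijective_id, h,
      submatrix_diagonal _ _ Subtype.val_injective, diagonal_map (map_zero φᵢ)]
    rfl
  have := Finset.card_le_mul_card_image_of_maps_to (s := Finset.univ) (t := Finset.univ)
    (fun x _ => Finset.mem_univ (f x)) (Fintype.card m)
    (fun i _ => by simpa [Fintype.card_subtype] using h_fiber i)
  simpa [mul_comm] using this

end Matrix

/-- If `q` is a product of `k` distinct primes, any inner product encoding of the
inequality predicate on `[n]` modulo `q` has length at least `n / k`. -/
theorem stmt_17 {n k ℓ : ℕ} (p : Fin k → ℕ) (hp : ∀ i, (p i).Prime)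
    (hinj : Function.Injective p) (q : ℕ) (hq : q = ∏ i, p i)
    (vx vy : Fin n → Fin ℓ → ZMod q)
    (hcorrect : ∀ x y : Fin n, ((∑ i, vx x i * vy y i) = 0 ↔ x ≠ y)) :
    n ≤ k * ℓ := by
  subst hq
  have : ∀ i, Fact (p i).Prime := fun i => ⟨hp i⟩
  have h_coprime : Pairwise fun i j => (p i).Coprime (p j) := fun i j hij =>
    (Nat.coprime_primes (hp i) (hp j)).2 (hinj.ne hij)
  have h_diag : Matrix.of vx * (Matrix.of vy).transpose =
      Matrix.diagonal fun x => ∑ j, vx x j * vy x j := by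
    ext x y
    by_cases hxy : x = y
    · simp [hxy, Matrix.mul_apply]
    · simp [hxy, Matrix.mul_apply, (hcorrect x y).2 hxy]
  simpa using Matrix.card_le_mul_card_of_mul_eq_diagonal (ZMod.prodEquivPi p h_coprime).toRingHom
    (ZMod.prodEquivPi p h_coprime).injective (fun x hx => (hcorrect x x).1 hx rfl) h_diag
end
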